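/- Let f = a₀ + a₁x + ⋯ + aₙxⁿ ∈ ℤ[x] be a primitive polynomial such that each complex zero θ of f satisfies |θ| > d, where the leading coefficient aₙ = ±pᵏ·d for positive integers k, d and a prime p not dividing d. Suppose j ∈ {1,…,n} satisfies gcd(k,j) = 1, pᵏ divides gcd(a_{n−j+1}, …, aₙ), and, in case k > 1, p does not divide a_{n−j}. If moreover |a₀/q| ≤ |aₙ|, where q is the smallest prime divisor of a₀, then f is irreducible in ℤ[x]. -/

import Mathlib

/-!
Suppose `f = g * h` with both factors of positive degree. The roots of each factor are roots
of `f`, so `|φ(0)| > d · |lc φ|` for `φ = g, h`; in particular `|g(0)| > 1`, whence `|g(0)| ≥ q`.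

The crux is that `p ^ k` divides the leading coefficient of one of the factors. Read from the top
coefficient down, the hypotheses say that the `p`-adic Newton polygon of `f` starts with the edge
from `(0, k)` to `(j, 0)`. As `gcd(k, j) = 1` this edge has no lattice point in its interior, so
it cannot be shared between the Newton polygons of the reversed factors, and `p` divides only one
of `lc g`, `lc h`. Instead of Newton polygons we use the weighted valuation
`w(P) = min_i (j · v_p(P_i) + k · i)`, which is additive on products (Gauss's lemma).

If `p ^ k ∣ lc h`, then `|aₙ| = p ^ k d ≤ d |lc h| < |h(0)|`, while
`q |h(0)| ≤ |g(0) h(0)| = |a₀| ≤ q |aₙ|`: a contradiction.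
-/

open Finset Polynomial

theorem Nat.mul_add_mul_ne_mul_of_coprime {k j α m i : ℕ} (hkj : k.Coprime j) (hα : α < k)
    (hi : 0 < i) : j * m + k * i ≠ j * α := by
  intro h
  have hji : j ∣ i := hkj.symm.dvd_of_dvd_mul_left <|
    (Nat.dvd_add_right (dvd_mul_right j m)).mp (h ▸ dvd_mul_right j α)
  obtain ⟨t, rfl⟩ := hji
  have ht : 0 < t := Nat.pos_of_mul_pos_left hi
  have hj : 0 < j := Nat.pos_of_mul_pos_right hi
  have : m + k * t = α := Nat.eq_of_mul_eq_mul_left hj (by rw [← h]; ring)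
  nlinarith

theorem ENat.eq_zero_or_eq_zero_of_add_le_one {a b : ℕ∞} (h : a + b ≤ 1) : a = 0 ∨ b = 0 := by
  by_contra! ⟨ha, hb⟩
  have := (add_le_add (Order.one_le_iff_ne_zero.2 ha) (Order.one_le_iff_ne_zero.2 hb)).trans h
  norm_num at this

theorem emultiplicity_pow_mul_of_not_dvd {α : Type*} [CommMonoidWithZero α] [IsCancelMulZero α]
    {p d : α} (hp : Prime p) (hd : ¬p ∣ d) (k : ℕ) : emultiplicity p (p ^ k * d) = k := by
  rw [emultiplicity_mul hp, emultiplicity_pow_self_of_prime hp, emultiplicity_eq_zero.2 hd,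
    add_zero]

theorem Multiset.lt_prod_of_one_le_of_forall_lt {s : Multiset ℝ} {r : ℝ} (hs : s ≠ 0) (hr : 1 ≤ r)
    (h : ∀ x ∈ s, r < x) : r < s.prod := by
  obtain ⟨x, hx⟩ := Multiset.exists_mem_of_ne_zero hs
  obtain ⟨t, rfl⟩ := Multiset.exists_cons_of_mem hx
  have ht : 1 ≤ t.prod := Multiset.one_le_prod fun y hy ↦ hr.trans (h y (mem_cons_of_mem hy)).le
  have hrx := h x (mem_cons_self x t)
  rw [prod_cons]
  nlinarith

theorem Int.abs_right_le_abs_ediv_of_mul_eq {x y c : ℤ} {q : ℕ} (hqc : (q : ℤ) ∣ c)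
    (hqmin : ∀ q' : ℕ, q'.Prime → (q' : ℤ) ∣ c → q ≤ q') (hx : 1 < |x|) (hxy : x * y = c) :
    |y| ≤ |c / q| := by
  rcases eq_or_ne y 0 with rfl | hy
  · simp
  have hqx : (q : ℤ) ≤ |x| := by
    rw [Int.abs_eq_natAbs] at hx ⊢
    have hr := hqmin _ (Nat.minFac_prime (by omega)) <|
      (Int.natCast_dvd.2 (Nat.minFac_dvd _)).trans (hxy ▸ dvd_mul_right x y)
    exact_mod_cast hr.trans (Nat.minFac_le (by omega))
  have hq : 0 < (q : ℤ) := by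
    refine Int.natCast_pos.2 (Nat.pos_of_ne_zero ?_)
    rintro rfl
    simp [← hxy, hy] at hqc
    simp [hqc] at hx
  refine le_of_mul_le_mul_left ?_ hq
  calc (q : ℤ) * |y| ≤ |x| * |y| := by gcongr
    _ = q * |c / q| := by
      rw [← abs_mul, hxy]
      conv_lhs => rw [← Int.mul_ediv_cancel' hqc]
      rw [abs_mul, abs_of_pos hq]

namespace AddValuation

variable {R Γ₀ : Type*} [Ring R] [LinearOrderedAddCommMonoidWithTop Γ₀] (v : AddValuation R Γ₀)

theorem map_sum_eq_of_lt {ι : Type*} [DecidableEq ι] {s : Finset ι} {f : ι → R} {j : ι}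
    (hj : j ∈ s) (hf : ∀ i ∈ s \ {j}, v (f j) < v (f i)) :
    v (∑ i ∈ s, f i) = v (f j) :=
  Valuation.map_sum_eq_of_lt v hj hf

end AddValuation

namespace Polynomial

section WeightedValuation

variable {R : Type*} [CommRing R] (v : AddValuation R ℕ∞) (a b : ℕ)

noncomputable def coeffWeight (P : R[X]) (i : ℕ) : ℕ∞ := a * v (P.coeff i) + b * i

/-- `δ ≤ weightedVal v a b P` says that all points `(i, v (P.coeff i))` lie on or above the line
`a * y + b * x = δ` of slope `-b / a`. -/
noncomputable def weightedVal (P : R[X]) : ℕ∞ := ⨅ i, coeffWeight v a b P i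

variable {v a b}

theorem weightedVal_le_coeffWeight (P : R[X]) (i : ℕ) :
    weightedVal v a b P ≤ coeffWeight v a b P i :=
  iInf_le _ i

theorem exists_first_coeffWeight_eq_weightedVal (P : R[X]) :
    ∃ u, coeffWeight v a b P u = weightedVal v a b P ∧
      ∀ i < u, weightedVal v a b P < coeffWeight v a b P i := by
  classical
  have h : ∃ u, coeffWeight v a b P u = weightedVal v a b P := ciInf_mem _
  exact ⟨Nat.find h, Nat.find_spec h, fun i hi ↦
    (weightedVal_le_coeffWeight P i).lt_of_ne' (Nat.find_min h hi)⟩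

theorem coeffWeight_add_coeffWeight (G H : R[X]) (i l : ℕ) :
    coeffWeight v a b G i + coeffWeight v a b H l =
      a * v (G.coeff i * H.coeff l) + b * (i + l : ℕ) := by
  simp only [coeffWeight, v.map_mul]
  push_cast
  ring

theorem coeffWeight_mul_of_forall_lt {G H : R[X]} {c : ℕ} {x : ℕ × ℕ} (hx : x ∈ antidiagonal c)
    (hlt : ∀ y ∈ antidiagonal c, y ≠ x →
      coeffWeight v a b G x.1 + coeffWeight v a b H x.2 <
        coeffWeight v a b G y.1 + coeffWeight v a b H y.2) :
    coeffWeight v a b (G * H) c = coeffWeight v a b G x.1 + coeffWeight v a b H x.2 := by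
  rw [coeffWeight_add_coeffWeight, mem_antidiagonal.1 hx, coeffWeight, coeff_mul,
    v.map_sum_eq_of_lt hx fun y hy ↦ ?_]
  rw [mem_sdiff, mem_singleton] at hy
  have := hlt y hy.1 hy.2
  rw [coeffWeight_add_coeffWeight, coeffWeight_add_coeffWeight, mem_antidiagonal.1 hx,
    mem_antidiagonal.1 hy.1] at this
  contrapose! this
  gcongr

theorem exists_coeffWeight_add_le_coeffWeight_mul (G H : R[X]) (c : ℕ) :
    ∃ x ∈ antidiagonal c,
      coeffWeight v a b G x.1 + coeffWeight v a b H x.2 ≤ coeffWeight v a b (G * H) c := by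
  obtain ⟨x, hx, hmin⟩ := (antidiagonal c).exists_min_image
    (fun x ↦ v (G.coeff x.1 * H.coeff x.2)) ⟨(0, c), by simp⟩
  refine ⟨x, hx, ?_⟩
  rw [coeffWeight_add_coeffWeight, mem_antidiagonal.1 hx, coeffWeight, coeff_mul]
  gcongr
  exact v.map_le_sum hmin

theorem add_le_weightedVal_mul (G H : R[X]) :
    weightedVal v a b G + weightedVal v a b H ≤ weightedVal v a b (G * H) := by
  refine le_iInf fun c ↦ ?_
  obtain ⟨x, -, hx⟩ := exists_coeffWeight_add_le_coeffWeight_mul (v := v) (a := a) (b := b) G H c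
  exact (add_le_add (weightedVal_le_coeffWeight G x.1) (weightedVal_le_coeffWeight H x.2)).trans hx

/-- If `uG`, `uH` are the first indices where the minima are attained, the coefficient of
`X ^ (uG + uH)` in `G * H` has a single term of minimal weight. -/
theorem weightedVal_mul_le (G H : R[X]) :
    weightedVal v a b (G * H) ≤ weightedVal v a b G + weightedVal v a b H := by
  obtain ⟨uG, huG, hltG⟩ := exists_first_coeffWeight_eq_weightedVal (v := v) (a := a) (b := b) G
  obtain ⟨uH, huH, hltH⟩ := exists_first_coeffWeight_eq_weightedVal (v := v) (a := a) (b := b) H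
  rcases eq_or_ne (weightedVal v a b G) ⊤ with hG | hG
  · simp [hG]
  rcases eq_or_ne (weightedVal v a b H) ⊤ with hH | hH
  · simp [hH]
  refine (weightedVal_le_coeffWeight _ (uG + uH)).trans_eq ?_
  rw [← huG, ← huH]
  refine coeffWeight_mul_of_forall_lt (x := (uG, uH)) (by simp) fun y hy hne ↦ ?_
  rw [HasAntidiagonal.mem_antidiagonal] at hy
  dsimp only
  rw [huG, huH]
  rcases lt_or_ge y.1 uG with h | h
  · exact ENat.add_lt_add_of_lt_of_le hH (hltG _ h) (weightedVal_le_coeffWeight _ _)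
  · have : y.2 < uH := by
      by_contra! h'
      exact hne (Prod.ext (by dsimp; omega) (by dsimp; omega))
    exact ENat.add_lt_add_of_le_of_lt hG (weightedVal_le_coeffWeight _ _) (hltH _ this)

theorem weightedVal_mul (G H : R[X]) :
    weightedVal v a b (G * H) = weightedVal v a b G + weightedVal v a b H :=
  (weightedVal_mul_le G H).antisymm (add_le_weightedVal_mul G H)

theorem le_weightedVal_of_le_weightedVal_mul {G H : R[X]} {α β : ℕ}
    (h : (a * (α + β) : ℕ∞) ≤ weightedVal v a b (G * H)) (hH : v (H.coeff 0) = β) :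
    (a * α : ℕ∞) ≤ weightedVal v a b G := by
  have hH0 : weightedVal v a b H ≤ a * β := by
    simpa [coeffWeight, hH] using weightedVal_le_coeffWeight (v := v) (a := a) (b := b) H 0
  rw [weightedVal_mul, mul_add] at h
  refine (ENat.add_le_add_iff_right (k := (a * β : ℕ∞)) ?_).mp (h.trans (by gcongr))
  exact_mod_cast ENat.natCast_ne_top (a * β)

theorem lt_coeffWeight_of_le_weightedVal {k j α : ℕ} (hkj : k.Coprime j) (hα : α < k) {P : R[X]}
    (hP : (j * α : ℕ∞) ≤ weightedVal v j k P) {i : ℕ} (hi : 0 < i) :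
    (j * α : ℕ∞) < coeffWeight v j k P i := by
  refine (hP.trans (weightedVal_le_coeffWeight P i)).lt_of_ne fun heq ↦ ?_
  rw [coeffWeight] at heq
  generalize v (P.coeff i) = e at heq
  induction e using ENat.recTopCoe with
  | top =>
    have hj : j ≠ 0 := by rintro rfl; simp_all [eq_comm]
    rw [ENat.mul_top (by exact_mod_cast hj), top_add] at heq
    exact ENat.natCast_ne_top _ heq
  | coe m =>
    norm_cast at heq
    exact Nat.mul_add_mul_ne_mul_of_coprime hkj hα hi heq.symm

theorem valuation_coeff_zero_eq_zero_or_of_mul {k j : ℕ} (hkj : k.Coprime j) {G H : R[X]}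
    (h0 : v ((G * H).coeff 0) = k) (hlt : ∀ i, 0 < i → i < j → k ≤ v ((G * H).coeff i))
    (hj : v ((G * H).coeff j) = 0) : v (G.coeff 0) = 0 ∨ v (H.coeff 0) = 0 := by
  by_contra! ⟨hG0, hH0⟩
  have hsum : v (G.coeff 0) + v (H.coeff 0) = k := by rw [← v.map_mul, ← mul_coeff_zero, h0]
  lift v (G.coeff 0) to ℕ using (by aesop) with α hα
  lift v (H.coeff 0) to ℕ using (by aesop) with β hβ
  norm_cast at hG0 hH0
  have hF : ∀ i, (j * k : ℕ∞) ≤ coeffWeight v j k (G * H) i := by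
    intro i
    rw [coeffWeight]
    rcases Nat.eq_zero_or_pos i with rfl | hi
    · rw [h0]; simp
    rcases lt_or_ge i j with hij | hij
    · exact le_add_right (by gcongr; exact hlt i hi hij)
    · exact le_add_left (by rw [mul_comm]; gcongr)
  have hwF : (j * (α + β) : ℕ∞) ≤ weightedVal v j k (G * H) := hsum ▸ le_iInf hF
  have hwG := le_weightedVal_of_le_weightedVal_mul hwF hβ.symm
  have hwH := le_weightedVal_of_le_weightedVal_mul
    (mul_comm G H ▸ add_comm (α : ℕ∞) β ▸ hwF) hα.symm
  have hsum' : α + β = k := by exact_mod_cast hsum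
  have hjpos : 0 < j := Nat.pos_of_ne_zero (by rintro rfl; simp_all)
  obtain ⟨x, hx, hle⟩ := exists_coeffWeight_add_le_coeffWeight_mul (v := v) (a := j) (b := k) G H j
  have hFj : coeffWeight v j k (G * H) j = j * (α + β) := by rw [coeffWeight, hj, hsum]; ring
  rw [HasAntidiagonal.mem_antidiagonal] at hx
  refine (lt_of_lt_of_le ?_ (hle.trans hFj.le)).false
  rw [mul_add]
  rcases Nat.eq_zero_or_pos x.1 with h1 | h1
  · exact ENat.add_lt_add_of_le_of_lt (by exact_mod_cast ENat.natCast_ne_top (j * α))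
      (hwG.trans (weightedVal_le_coeffWeight _ _))
      (lt_coeffWeight_of_le_weightedVal hkj (by omega) hwH (by omega))
  · exact ENat.add_lt_add_of_lt_of_le (by exact_mod_cast ENat.natCast_ne_top (j * β))
      (lt_coeffWeight_of_le_weightedVal hkj (by omega) hwG h1)
      (hwH.trans (weightedVal_le_coeffWeight _ _))

end WeightedValuation

theorem valuation_leadingCoeff_eq_zero_or_of_mul {R : Type*} [CommRing R] [IsDomain R]
    {v : AddValuation R ℕ∞} {k j : ℕ} (hkj : k.Coprime j) {f g h : R[X]} (hgh : f = g * h)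
    (hjn : j ≤ f.natDegree) (hlc : v f.leadingCoeff = k)
    (hlt : ∀ i, f.natDegree - j < i → i < f.natDegree → k ≤ v (f.coeff i))
    (hj : 1 < k → v (f.coeff (f.natDegree - j)) = 0) :
    v g.leadingCoeff = 0 ∨ v h.leadingCoeff = 0 := by
  rcases le_or_gt k 1 with hk | hk
  · refine ENat.eq_zero_or_eq_zero_of_add_le_one ?_
    rw [← v.map_mul, ← leadingCoeff_mul, ← hgh, hlc]
    exact_mod_cast hk
  have hrev : g.reverse * h.reverse = f.reverse := by rw [hgh, reverse_mul_of_domain]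
  have := valuation_coeff_zero_eq_zero_or_of_mul hkj
    (by rwa [hrev, coeff_zero_reverse])
    (fun i hi hij ↦ by
      rw [hrev, coeff_reverse, revAt_le (by omega)]
      exact hlt _ (by omega) (by omega))
    (by rw [hrev, coeff_reverse, revAt_le hjn]; exact hj hk)
  rwa [coeff_zero_reverse, coeff_zero_reverse] at this

theorem IsPrimitive.irreducible_of_forall_natDegree_pos {R : Type*} [CommRing R] [IsDomain R]
    {f : R[X]} (hf : f.IsPrimitive) (hdeg : 0 < f.natDegree)
    (hfac : ∀ g h : R[X], f = g * h → 0 < g.natDegree → 0 < h.natDegree → False) :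
    Irreducible f := by
  refine ⟨fun hu ↦ hdeg.ne' (natDegree_eq_zero_of_isUnit hu), fun g h hgh ↦ ?_⟩
  have hunit : ∀ a b : R[X], f = a * b → a.natDegree = 0 → IsUnit a := fun a b hab ha ↦ by
    rw [eq_C_of_natDegree_eq_zero ha] at hab ⊢
    exact isUnit_C.2 (hf _ ⟨b, hab⟩)
  by_contra! H
  exact hfac g h hgh (Nat.pos_of_ne_zero fun h0 ↦ H.1 (hunit g h hgh h0))
    (Nat.pos_of_ne_zero fun h0 ↦ H.2 (hunit h g (hgh.trans (mul_comm g h)) h0))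

theorem mul_norm_leadingCoeff_lt_norm_coeff_zero {K : Type*} [NormedField K] [IsAlgClosed K]
    {P : K[X]} {r : ℝ} (hr : 1 ≤ r) (hP : 0 < P.natDegree) (hroots : ∀ z ∈ P.roots, r < ‖z‖) :
    r * ‖P.leadingCoeff‖ < ‖P.coeff 0‖ := by
  have hsplit := IsAlgClosed.splits P
  have hP0 : P ≠ 0 := by rintro rfl; simp at hP
  rw [hsplit.coeff_zero_eq_leadingCoeff_mul_prod_roots, norm_mul, norm_mul, norm_pow, norm_neg,
    norm_one, one_pow, one_mul, mul_comm r, ← normHom_apply (α := K) P.roots.prod,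
    map_multiset_prod]
  refine mul_lt_mul_of_pos_left (Multiset.lt_prod_of_one_le_of_forall_lt ?_ hr ?_) (by simpa)
  · rw [Ne, Multiset.map_eq_zero, ← Multiset.card_eq_zero, ← hsplit.natDegree_eq_card_roots]
    exact hP.ne'
  · simp only [Multiset.mem_map]
    rintro _ ⟨z, hz, rfl⟩
    exact hroots z hz

theorem natCast_mul_abs_leadingCoeff_lt_abs_coeff_zero {f φ : ℤ[X]} {d : ℕ} (hd : 0 < d)
    (hφf : φ ∣ f) (hφ : 0 < φ.natDegree) (hroots : ∀ θ : ℂ, aeval θ f = 0 → (d : ℝ) < ‖θ‖) :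
    d * |φ.leadingCoeff| < |φ.coeff 0| := by
  have hinj : Function.Injective (algebraMap ℤ ℂ) := RingHom.injective_int _
  have := mul_norm_leadingCoeff_lt_norm_coeff_zero (P := φ.map (algebraMap ℤ ℂ)) (r := d)
    (by exact_mod_cast hd) (by rwa [natDegree_map_eq_of_injective hinj]) fun z hz ↦ hroots z ?_
  · rw [leadingCoeff_map_of_injective hinj, coeff_map] at this
    simp only [eq_intCast, Complex.norm_intCast] at this
    exact_mod_cast this
  · obtain ⟨ψ, rfl⟩ := hφf
    rw [map_mul, ← eval_map_algebraMap, (isRoot_of_mem_roots hz).eq_zero, zero_mul]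

theorem one_lt_abs_coeff_zero_of_dvd {f φ : ℤ[X]} {d : ℕ} (hd : 0 < d) (hφf : φ ∣ f)
    (hφ : 0 < φ.natDegree) (hroots : ∀ θ : ℂ, aeval θ f = 0 → (d : ℝ) < ‖θ‖) :
    1 < |φ.coeff 0| := by
  have := natCast_mul_abs_leadingCoeff_lt_abs_coeff_zero hd hφf hφ hroots
  have := Int.one_le_abs (leadingCoeff_ne_zero.2 (ne_zero_of_natDegree_gt hφ))
  have : (1 : ℤ) ≤ d := by exact_mod_cast hd
  nlinarith

end Polynomial

theorem stmt2_general (f : Polynomial ℤ) (d k p j q : ℕ) (hd : 0 < d)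
    (hp : p.Prime) (hpd : ¬ (p : ℤ) ∣ (d : ℤ))
    (hprim : f.IsPrimitive)
    (hn : f.coeff f.natDegree = (p : ℤ) ^ k * d ∨
      f.coeff f.natDegree = -((p : ℤ) ^ k * d))
    (hj1 : 1 ≤ j) (hjn : j ≤ f.natDegree)
    (hgcd : Nat.gcd k j = 1)
    (hdvd : ∀ i, f.natDegree - j + 1 ≤ i → i ≤ f.natDegree → (p : ℤ) ^ k ∣ f.coeff i)
    (hk1 : 1 < k → ¬ (p : ℤ) ∣ f.coeff (f.natDegree - j))
    (hqdvd : (q : ℤ) ∣ f.coeff 0)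
    (hqmin : ∀ q' : ℕ, q'.Prime → (q' : ℤ) ∣ f.coeff 0 → q ≤ q')
    (hsize : |f.coeff 0 / (q : ℤ)| ≤ |f.coeff f.natDegree|)
    (hroots : ∀ θ : ℂ, Polynomial.aeval θ f = 0 → (d : ℝ) < ‖θ‖) :
    Irreducible f := by
  have hpZ : Prime (p : ℤ) := Nat.prime_iff_prime_int.mp hp
  let v := multiplicity_addValuation hpZ
  have hvf : v f.leadingCoeff = k := by
    change emultiplicity (p : ℤ) (f.coeff f.natDegree) = k
    rcases hn with hn | hn <;>
      simp [hn, emultiplicity_neg, emultiplicity_pow_mul_of_not_dvd hpZ hpd]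
  refine hprim.irreducible_of_forall_natDegree_pos (by omega) fun g h hgh hg hh ↦ ?_
  have hlc : v g.leadingCoeff = 0 ∨ v h.leadingCoeff = 0 :=
    valuation_leadingCoeff_eq_zero_or_of_mul hgcd hgh hjn hvf
      (fun i hi hi' ↦ pow_dvd_iff_le_emultiplicity.1 (hdvd i (by omega) hi'.le))
      (fun hk ↦ emultiplicity_eq_zero.2 (hk1 hk))
  wlog hg0 : v g.leadingCoeff = 0 generalizing g h
  · exact this h g (by rw [hgh, mul_comm]) hh hg hlc.symm (hlc.resolve_left hg0)
  have hpk : (p : ℤ) ^ k ≤ |h.leadingCoeff| := by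
    refine Int.le_of_dvd (abs_pos.2 (leadingCoeff_ne_zero.2 (ne_zero_of_natDegree_gt hh)))
      ((dvd_abs _ _).2 (pow_dvd_iff_le_emultiplicity.2 (le_of_eq ?_)))
    rw [← hvf, hgh, leadingCoeff_mul, v.map_mul, hg0, zero_add]
    rfl
  have hh0 : |h.coeff 0| ≤ |f.coeff f.natDegree| :=
    (Int.abs_right_le_abs_ediv_of_mul_eq hqdvd hqmin
      (one_lt_abs_coeff_zero_of_dvd hd ⟨h, hgh⟩ hg hroots) (by rw [hgh, mul_coeff_zero])).trans
      hsize
  have hlt := natCast_mul_abs_leadingCoeff_lt_abs_coeff_zero hd ⟨g, hgh.trans (mul_comm g h)⟩ hh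
    hroots
  refine lt_irrefl |f.coeff f.natDegree| ?_
  calc |f.coeff f.natDegree| = p ^ k * d := by rcases hn with hn | hn <;> simp [hn, abs_mul]
    _ ≤ d * |h.leadingCoeff| := by rw [mul_comm]; gcongr
    _ < |h.coeff 0| := hlt
    _ ≤ |f.coeff f.natDegree| := hh0

theorem stmt2 (f : Polynomial ℤ) (d k p j q : ℕ) (hd : 0 < d) (hk : 0 < k)
    (hp : p.Prime) (hpd : ¬ (p : ℤ) ∣ (d : ℤ))
    (hprim : f.IsPrimitive)
    (hn : f.coeff f.natDegree = (p : ℤ) ^ k * d ∨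
      f.coeff f.natDegree = -((p : ℤ) ^ k * d))
    (hj1 : 1 ≤ j) (hjn : j ≤ f.natDegree)
    (hgcd : Nat.gcd k j = 1)
    (hdvd : ∀ i, f.natDegree - j + 1 ≤ i → i ≤ f.natDegree → (p : ℤ) ^ k ∣ f.coeff i)
    (hk1 : 1 < k → ¬ (p : ℤ) ∣ f.coeff (f.natDegree - j))
    (ha0 : 1 < (f.coeff 0).natAbs)
    (hq : q.Prime) (hqdvd : (q : ℤ) ∣ f.coeff 0)
    (hqmin : ∀ q' : ℕ, q'.Prime → (q' : ℤ) ∣ f.coeff 0 → q ≤ q')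
    (hsize : |f.coeff 0 / (q : ℤ)| ≤ |f.coeff f.natDegree|)
    (hroots : ∀ θ : ℂ, Polynomial.aeval θ f = 0 → (d : ℝ) < ‖θ‖) :
    Irreducible f :=
  stmt2_general f d k p j q hd hp hpd hprim hn hj1 hjn hgcd hdvd hk1 hqdvd hqmin hsize hroots
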